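/- Let R be a commutative ring, q ∈ R, I a finite set, and let 𝓕 be any set of set compositions of I. Define h : ℕ → R by h(n) = Σ q^{w(f)}, the sum over all functions f : I → Fin n whose level-set composition comp(f) belongs to 𝓕, where w(f) = Σ_{i ∈ I} f(i) (values in Fin n viewed as natural numbers). Then 𝔇_{|I|} h = 0; that is, h is a Gaussian polynomial function of degree at most |I|. -/

import Mathlib

/-- The level-set composition of `f : I → α`: the list of preimages of the distinct
values attained by `f`, listed in increasing order of the values. -/
def levelComp {I : Type*} [Fintype I] [DecidableEq I] {α : Type*} [LinearOrder α]
    (f : I → α) : List (Finset I) :=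
  ((Finset.univ.image f).sort (· ≤ ·)).map fun v => Finset.univ.filter fun i => f i = v

/-- The operator `(D_j f)(n) = f(n+1) − q^j·f(n)`. -/
def Dop {R : Type*} [CommRing R] (q : R) (j : ℕ) (f : ℕ → R) : ℕ → R :=
  fun n => f (n + 1) - q ^ j * f n

/-- The operator `𝔇_d = D_0 ∘ D_1 ∘ ⋯ ∘ D_d`; a function `f : ℕ → R` is a Gaussian
polynomial function of degree at most `d` if `𝔇_d f = 0`. -/
def Dfull {R : Type*} [CommRing R] (q : R) : ℕ → (ℕ → R) → (ℕ → R)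
  | 0 => Dop q 0
  | d + 1 => Dfull q d ∘ Dop q (d + 1)

/-!
Split the sum according to the composition `comp(f) = (C_1, …, C_k)`. The maps with a given
composition are exactly `v ∘ idx`, where `idx i` is the index of the block containing `i` and
`v : Fin k → Fin n` is strictly increasing, so each piece is
`S_c(n) = Σ_{v strictly increasing} q^{Σ_j c_j v_j}` with `c_j = |C_j| ≥ 1` and `Σ_j c_j = |I|`.
Separating the `v` with `v 0 = 0` from those with `v 0 > 0` gives
`D_{c_1 + ⋯ + c_k} S_c = q^{c_2 + ⋯ + c_k} S_{(c_2, …, c_k)}`; as the `D_j` commute and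
`c_1 ≥ 1`, induction on `k` shows `𝔇_d S_c = 0` for every `d ≥ Σ_j c_j`.
-/

section Operators

variable {R : Type*} [CommRing R] (q : R)

theorem Dop_comm (i j : ℕ) (f : ℕ → R) : Dop q i (Dop q j f) = Dop q j (Dop q i f) := by
  funext n; simp only [Dop]; ring

theorem Dfull_Dop_comm (d j : ℕ) (f : ℕ → R) : Dfull q d (Dop q j f) = Dop q j (Dfull q d f) := by
  induction d generalizing f with
  | zero => exact Dop_comm q 0 j f
  | succ d ih => simp only [Dfull, Function.comp_apply, Dop_comm q (d + 1) j, ih]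

theorem Dfull_succ (d : ℕ) (f : ℕ → R) : Dfull q (d + 1) f = Dop q (d + 1) (Dfull q d f) :=
  Dfull_Dop_comm q d (d + 1) f

theorem Dfull_eq_zero_of_le {d e : ℕ} (hde : d ≤ e) {f : ℕ → R} (hf : Dfull q d f = 0) :
    Dfull q e f = 0 := by
  induction e, hde using Nat.le_induction with
  | base => exact hf
  | succ e _ ih => rw [Dfull_succ, ih]; funext n; simp [Dop]

theorem Dfull_const (d : ℕ) (a : R) : Dfull q d (fun _ => a) = 0 :=
  Dfull_eq_zero_of_le q d.zero_le (by funext n; simp [Dfull, Dop])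

theorem isLinearMap_Dop (j : ℕ) : IsLinearMap R (Dop q j) where
  map_add f g := by funext n; simp only [Dop, Pi.add_apply]; ring
  map_smul a f := by funext n; simp only [Dop, Pi.smul_apply, smul_eq_mul]; ring

theorem isLinearMap_Dfull (d : ℕ) : IsLinearMap R (Dfull q d) := by
  induction d with
  | zero => exact isLinearMap_Dop q 0
  | succ d ih =>
    have hD := isLinearMap_Dop q (d + 1)
    exact ⟨fun f g => by simp only [Dfull, Function.comp_apply, hD.map_add, ih.map_add],
      fun a f => by simp only [Dfull, Function.comp_apply, hD.map_smul, ih.map_smul]⟩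

theorem Dfull_sum {ι : Type*} (d : ℕ) (s : Finset ι) (F : ι → ℕ → R) :
    Dfull q d (∑ i ∈ s, F i) = ∑ i ∈ s, Dfull q d (F i) :=
  map_sum (IsLinearMap.mk' _ (isLinearMap_Dfull q d)) F s

end Operators

section StrictMonoSum

variable {R : Type*} [CommRing R] (q : R)

def strictMonoSum {k : ℕ} (c : Fin k → ℕ) (n : ℕ) : R :=
  ∑ v ∈ Finset.univ.filter (fun v : Fin k → Fin n => StrictMono v), q ^ ∑ j, c j * (v j : ℕ)

theorem strictMonoSum_zero (c : Fin 0 → ℕ) : strictMonoSum q c = fun _ => 1 := by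
  have hv (n : ℕ) (v : Fin 0 → Fin n) : StrictMono v := fun a => a.elim0
  funext n
  simp [strictMonoSum, hv]

theorem exists_eq_succ_comp {k n : ℕ} {v : Fin k → Fin (n + 1)} (hv : ∀ j, v j ≠ 0) :
    ∃ u : Fin k → Fin n, v = Fin.succ ∘ u :=
  ⟨fun j => (v j).pred (hv j), funext fun _ => (Fin.succ_pred _ _).symm⟩

theorem strictMono_succ_comp_iff {k n : ℕ} {u : Fin k → Fin n} :
    StrictMono (Fin.succ ∘ u) ↔ StrictMono u :=
  ⟨fun h _ _ hab => Fin.succ_lt_succ_iff.mp (h hab),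
    fun h _ _ hab => Fin.succ_lt_succ_iff.mpr (h hab)⟩

theorem filter_strictMono_zero_ne {k n : ℕ} :
    Finset.univ.filter (fun v : Fin (k + 1) → Fin (n + 1) => StrictMono v ∧ v 0 ≠ 0) =
      (Finset.univ.filter fun u : Fin (k + 1) → Fin n => StrictMono u).map
        ⟨(Fin.succ ∘ ·), (Fin.succ_injective n).comp_left⟩ := by
  ext v
  simp only [Finset.mem_filter, Finset.mem_univ, true_and, Finset.mem_map,
    Function.Embedding.coeFn_mk]
  constructor
  · rintro ⟨hv, h0⟩
    obtain ⟨u, rfl⟩ := exists_eq_succ_comp (v := v) fun j hj =>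
      h0 (Fin.le_zero_iff.mp ((hv.monotone (Fin.zero_le j)).trans_eq hj))
    exact ⟨u, strictMono_succ_comp_iff.mp hv, rfl⟩
  · rintro ⟨u, hu, rfl⟩
    exact ⟨strictMono_succ_comp_iff.mpr hu, Fin.succ_ne_zero _⟩

theorem filter_strictMono_zero_eq {k n : ℕ} :
    Finset.univ.filter (fun v : Fin (k + 1) → Fin (n + 1) => StrictMono v ∧ v 0 = 0) =
      (Finset.univ.filter fun w : Fin k → Fin n => StrictMono w).map
        ⟨fun w => (Fin.cons 0 (Fin.succ ∘ w) : Fin (k + 1) → Fin (n + 1)),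
          (Fin.cons_right_injective _).comp (Fin.succ_injective n).comp_left⟩ := by
  ext v
  simp only [Finset.mem_filter, Finset.mem_univ, true_and, Finset.mem_map,
    Function.Embedding.coeFn_mk]
  constructor
  · rintro ⟨hv, h0⟩
    rw [← Fin.cons_self_tail v, h0, Fin.strictMono_cons] at hv
    obtain ⟨w, hw⟩ := exists_eq_succ_comp fun j => (hv.1 j).ne'
    refine ⟨w, strictMono_succ_comp_iff.mp (hw ▸ hv.2), ?_⟩
    show Fin.cons 0 (Fin.succ ∘ w) = v
    rw [← hw, ← h0, Fin.cons_self_tail]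
  · rintro ⟨w, hw, rfl⟩
    exact ⟨Fin.strictMono_cons.mpr ⟨fun j => Fin.succ_pos _, strictMono_succ_comp_iff.mpr hw⟩,
      rfl⟩

theorem Dop_strictMonoSum {k : ℕ} (c : Fin (k + 1) → ℕ) :
    Dop q (∑ j, c j) (strictMonoSum q c) =
      q ^ (∑ j, Fin.tail c j) • strictMonoSum q (Fin.tail c) := by
  funext n
  have hzero : ∑ v ∈ Finset.univ.filter
      (fun v : Fin (k + 1) → Fin (n + 1) => StrictMono v ∧ v 0 = 0), q ^ ∑ j, c j * (v j : ℕ) =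
      q ^ (∑ j, Fin.tail c j) * strictMonoSum q (Fin.tail c) n := by
    rw [filter_strictMono_zero_eq, Finset.sum_map, strictMonoSum, Finset.mul_sum]
    refine Finset.sum_congr rfl fun w _ => ?_
    simp [Fin.sum_univ_succ, Fin.tail, mul_add, Finset.sum_add_distrib, pow_add, mul_comm]
  have hne : ∑ v ∈ Finset.univ.filter
      (fun v : Fin (k + 1) → Fin (n + 1) => StrictMono v ∧ v 0 ≠ 0), q ^ ∑ j, c j * (v j : ℕ) =
      q ^ (∑ j, c j) * strictMonoSum q c n := by
    rw [filter_strictMono_zero_ne, Finset.sum_map, strictMonoSum, Finset.mul_sum]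
    refine Finset.sum_congr rfl fun u _ => ?_
    simp [mul_add, Finset.sum_add_distrib, pow_add, mul_comm]
  rw [Dop, strictMonoSum, ← Finset.sum_filter_add_sum_filter_not _ fun v => v 0 = 0,
    Finset.filter_filter, Finset.filter_filter, hzero, hne]
  simp

theorem Dfull_strictMonoSum {k : ℕ} (c : Fin k → ℕ) (hc : ∀ j, 1 ≤ c j) {d : ℕ}
    (hd : ∑ j, c j ≤ d) : Dfull q d (strictMonoSum q c) = 0 := by
  induction k generalizing d with
  | zero => rw [strictMonoSum_zero]; exact Dfull_const q d 1
  | succ k ih =>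
    refine Dfull_eq_zero_of_le q hd ?_
    have hsum : ∑ j, c j = c 0 + ∑ j, Fin.tail c j := Fin.sum_univ_succ c
    have hc0 := hc 0
    obtain ⟨m, hm⟩ : ∃ m, ∑ j, c j = m + 1 := ⟨c 0 - 1 + ∑ j, Fin.tail c j, by omega⟩
    have htail : Dfull q m (strictMonoSum q (Fin.tail c)) = 0 :=
      ih _ (fun j => hc j.succ) (show ∑ j, Fin.tail c j ≤ m by omega)
    rw [hm, Dfull, Function.comp_apply, ← hm, Dop_strictMonoSum, (isLinearMap_Dfull q m).map_smul,
      htail, smul_zero]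

end StrictMonoSum

section LevelComp

variable {I : Type*} [Fintype I]

theorem exists_strictMono_comp_surjective {α : Type*} [LinearOrder α] (f : I → α) :
    ∃ k ≤ Fintype.card I, ∃ (v : Fin k → α) (idx : I → Fin k),
      StrictMono v ∧ Function.Surjective idx ∧ f = v ∘ idx := by
  set s := Finset.univ.image f
  let e := s.orderIsoOfFin rfl
  refine ⟨s.card, Finset.card_image_le, fun j => e j, fun i => e.symm ⟨f i, by simp [s]⟩,
    fun a b hab => e.strictMono hab, fun j => ?_, funext fun i => by simp⟩
  obtain ⟨i, -, hi⟩ := Finset.mem_image.mp (e j).2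
  exact ⟨i, e.symm_apply_eq.mpr (Subtype.ext hi)⟩

variable [DecidableEq I]

theorem levelComp_strictMono_comp {α β : Type*} [LinearOrder α] [LinearOrder β]
    {v : α → β} (hv : StrictMono v) (f : I → α) : levelComp (v ∘ f) = levelComp f := by
  let e : α ↪ β := ⟨v, hv.injective⟩
  have himage : Finset.univ.image (v ∘ f) = (Finset.univ.image f).map e := by
    rw [Finset.map_eq_image, Finset.image_image]; rfl
  rw [levelComp, levelComp, himage, ← (hv.strictMonoOn _).map_finsetSort, List.map_map]
  refine List.map_congr_left fun a _ => Finset.filter_congr fun i _ => ?_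
  exact hv.injective.eq_iff

theorem levelComp_of_surjective {k : ℕ} {idx : I → Fin k} (hidx : Function.Surjective idx) :
    levelComp idx = List.ofFn fun j => Finset.univ.filter fun i => idx i = j := by
  rw [levelComp, Finset.image_univ_of_surjective hidx, Fin.sort_univ, List.ofFn_eq_map]

theorem levelComp_eq_levelComp_iff {α : Type*} [LinearOrder α] {k : ℕ} {idx : I → Fin k}
    (hidx : Function.Surjective idx) (f : I → α) :
    levelComp f = levelComp idx ↔ ∃ v : Fin k → α, StrictMono v ∧ f = v ∘ idx := by
  refine ⟨fun hf => ?_, fun ⟨v, hv, hf⟩ => hf ▸ levelComp_strictMono_comp hv idx⟩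
  obtain ⟨k', -, v, idx', hv, hidx', rfl⟩ := exists_strictMono_comp_surjective f
  rw [levelComp_strictMono_comp hv, levelComp_of_surjective hidx,
    levelComp_of_surjective hidx'] at hf
  obtain rfl : k' = k := by simpa using congrArg List.length hf
  have hfib := List.ofFn_inj.mp hf
  suffices idx' = idx from ⟨v, hv, this ▸ rfl⟩
  funext i
  have : i ∈ Finset.univ.filter fun i' => idx' i' = idx' i := by simp
  rw [congrFun hfib (idx' i)] at this
  exact (Finset.mem_filter.mp this).2.symm

end LevelComp

section LevelCompSum

variable {I : Type*} [Fintype I] [DecidableEq I] {R : Type*} [CommRing R] (q : R)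

def levelCompSum (C : List (Finset I)) (n : ℕ) : R :=
  ∑ f ∈ Finset.univ.filter (fun f : I → Fin n => levelComp f = C), q ^ ∑ i, (f i : ℕ)

theorem levelCompSum_levelComp_of_surjective {k : ℕ} {idx : I → Fin k}
    (hidx : Function.Surjective idx) :
    levelCompSum q (levelComp idx) =
      strictMonoSum q fun j => (Finset.univ.filter fun i => idx i = j).card := by
  funext n
  have hfiber : Finset.univ.filter (fun f : I → Fin n => levelComp f = levelComp idx) =
      (Finset.univ.filter fun v : Fin k → Fin n => StrictMono v).map
        ⟨(· ∘ idx), hidx.injective_comp_right⟩ := by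
    ext f
    simp [levelComp_eq_levelComp_iff hidx, eq_comm]
  rw [levelCompSum, hfiber, Finset.sum_map, strictMonoSum]
  refine Finset.sum_congr rfl fun v _ => congrArg (q ^ ·) ?_
  rw [Function.Embedding.coeFn_mk]
  simp [Finset.sum_comp (fun j => (v j : ℕ)) idx, Finset.image_univ_of_surjective hidx]

theorem exists_levelComp_eq_surjective {α : Type*} [LinearOrder α] (f : I → α) :
    ∃ k ≤ Fintype.card I, ∃ idx : I → Fin k,
      Function.Surjective idx ∧ levelComp f = levelComp idx := by
  obtain ⟨k, hk, v, idx, hv, hidx, rfl⟩ := exists_strictMono_comp_surjective f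
  exact ⟨k, hk, idx, hidx, levelComp_strictMono_comp hv idx⟩

-- Every composition of `I` has at most `|I|` blocks, so it is already realized by a map into
-- `Fin |I|`; this finite set of compositions therefore indexes the whole sum.
theorem sum_levelComp_mem_eq_sum_levelCompSum (𝓕 : Set (List (Finset I)))
    [DecidablePred (· ∈ 𝓕)] (n : ℕ) :
    ∑ f ∈ Finset.univ.filter (fun f : I → Fin n => levelComp f ∈ 𝓕), q ^ ∑ i, (f i : ℕ) =
      ∑ C ∈ (Finset.univ.image (levelComp : (I → Fin (Fintype.card I)) → _)).filter (· ∈ 𝓕),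
        levelCompSum q C n := by
  refine (Finset.sum_fiberwise_of_maps_to (g := levelComp) (fun f hf => ?_) _).symm.trans
    (Finset.sum_congr rfl fun C hC => ?_)
  · obtain ⟨k, hk, idx, hidx, hf'⟩ := exists_levelComp_eq_surjective f
    refine Finset.mem_filter.mpr ⟨Finset.mem_image.mpr ⟨Fin.castLE hk ∘ idx, Finset.mem_univ _, ?_⟩,
      (Finset.mem_filter.mp hf).2⟩
    rw [levelComp_strictMono_comp (Fin.strictMono_castLE hk), hf']
  · rw [levelCompSum, Finset.filter_filter]
    refine Finset.sum_congr (Finset.filter_congr fun f _ => ?_) fun _ _ => rfl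
    exact ⟨And.right, fun h => ⟨h ▸ (Finset.mem_filter.mp hC).2, h⟩⟩

end LevelCompSum

open scoped Classical in
/-- For any set `𝓕` of set compositions of `I`, the function
`h(n) = Σ_{f : I → Fin n, comp(f) ∈ 𝓕} q^{w(f)}`, where `w(f) = Σ_{i ∈ I} f(i)`, is a
Gaussian polynomial function of degree at most `|I|`. -/
theorem Dfull_levelComp_sum {I : Type*} [Fintype I] [DecidableEq I]
    {R : Type*} [CommRing R] (q : R) (𝓕 : Set (List (Finset I))) :
    Dfull q (Fintype.card I)
      (fun n => ∑ f ∈ Finset.univ.filter (fun f : I → Fin n => levelComp f ∈ 𝓕),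
        q ^ ∑ i, (f i : ℕ)) = 0 := by
  simp_rw [sum_levelComp_mem_eq_sum_levelCompSum q 𝓕, ← Finset.sum_fn, Dfull_sum]
  refine Finset.sum_eq_zero fun C hC => ?_
  obtain ⟨g, -, rfl⟩ := Finset.mem_image.mp (Finset.mem_filter.mp hC).1
  obtain ⟨k, -, idx, hidx, hg⟩ := exists_levelComp_eq_surjective g
  rw [hg, levelCompSum_levelComp_of_surjective q hidx]
  refine Dfull_strictMonoSum q _ (fun j => ?_) ?_
  · obtain ⟨i, hi⟩ := hidx j
    exact Finset.card_pos.mpr ⟨i, by simp [hi]⟩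
  · rw [← Finset.card_eq_sum_card_fiberwise fun i _ => Finset.mem_univ (idx i)]
    rfl
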